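/- arXiv:1512.03648 — 2 statements merged into one kernel-verified Lean document; each statement's English description precedes it below -/
import Mathlib

section
/- Let ψ(x) = x - ⌊x⌋ - 1/2. For every Y > 1 there exist 1-periodic functions A and B with absolutely convergent Fourier expansions A(x) = ∑_{h ≠ 0} A_h e(hx) and B(x) = Y^{-1} + ∑_{h ≠ 0} B_h e(hx), such that |ψ(x) - A(x)| ≤ B(x) for all real x, and the coefficients satisfy |A_h|, |B_h| ≪ min(1/|h|, Y³/|h|⁴) with an absolute implied constant. -/
open scoped Classical

/-- `e(x) = exp(2πix)`. -/
noncomputable def e (x : ℝ) : ℂ := Complex.exp (2 * Real.pi * Complex.I * x)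

/-- The sawtooth function `ψ(x) = x - ⌊x⌋ - 1/2`. -/
noncomputable def sawtooth (x : ℝ) : ℝ := x - ⌊x⌋ - 1 / 2

/-!
Smooth out the jump of `ψ` at the integers. Let `K` be the distribution function of a sum of
three independent uniform variables on `[0, δ]`: a `C²` cubic spline, `0` at `0` and `1` on
`[3δ, ∞)`. On `[0, 1)` put `A = (u - 1/2) + g` with `g = 1 - K - 3δ/2`, so that `A` is continuous
and `1`-periodic and `ψ - A = -g`. Since `g ≥ -3δ/2`, the function `B(u) = 9δ/2 + g(u) + g(1 - u)`
dominates `|g|`, and its mean is `9δ/2 = Y⁻¹` for `δ = 2/(9Y)`.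

The Fourier coefficients are computed exactly. With `c = -2πih`, the sawtooth contributes `1/c`,
which cancels against the same term in the coefficient of `g`, leaving
`(1 - exp(cδ))³ / (δ³c⁴)`; bounding `|1 - exp(cδ)|` by `2` and by `|c|δ` gives
`min(1/|c|, 8/(δ³|c|⁴)) ≪ min(1/|h|, Y³/|h|⁴)`.
-/

open Complex Real Set intervalIntegral

theorem exp_neg_two_pi_I_int_mul (n : ℤ) : exp (-2 * π * I * n) = 1 := by
  simpa [mul_comm, mul_assoc, mul_left_comm] using exp_int_mul_two_pi_mul_I (-n)

theorem fourierCoeffOn_zero_one_eq_integral (f : ℝ → ℂ) (n : ℤ) :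
    fourierCoeffOn zero_lt_one f n = ∫ u in (0:ℝ)..1, exp (-2 * π * I * n * u) * f u := by
  rw [fourierCoeffOn_eq_integral]
  simp only [fourier_coe_apply, sub_zero, div_one, one_smul, smul_eq_mul, ofReal_one]
  congr 1; ext u; congr 2; push_cast; ring

theorem fourierCoeffOn_add {E : Type*} [NormedAddCommGroup E] [NormedSpace ℂ E] {a b : ℝ}
    (hab : a < b) {f g : ℝ → E} (hf : IntervalIntegrable f MeasureTheory.volume a b)
    (hg : IntervalIntegrable g MeasureTheory.volume a b) (n : ℤ) :
    fourierCoeffOn hab (fun x => f x + g x) n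
      = fourierCoeffOn hab f n + fourierCoeffOn hab g n := by
  have : Fact (0 < b - a) := ⟨sub_pos.2 hab⟩
  have hcont : ContinuousOn (fun x : ℝ => fourier (-n) (x : AddCircle (b - a))) (uIcc a b) :=
    ((map_continuous (fourier (-n))).comp (AddCircle.continuous_mk' _)).continuousOn
  simp only [fourierCoeffOn_eq_integral, smul_add]
  rw [integral_add (hf.continuousOn_smul hcont) (hg.continuousOn_smul hcont), smul_add]

theorem fourierCoeffOn_comp_one_sub (f : ℝ → ℂ) (n : ℤ) :
    fourierCoeffOn zero_lt_one (fun u => f (1 - u)) n = fourierCoeffOn zero_lt_one f (-n) := by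
  have hshift (v : ℝ) : exp (-2 * π * I * n * ↑(1 - v)) = exp (-2 * π * I * ↑(-n) * v) := by
    rw [ofReal_sub, ofReal_one, mul_sub, mul_one, sub_eq_neg_add, Complex.exp_add,
      exp_neg_two_pi_I_int_mul, mul_one]
    push_cast; ring_nf
  have := integral_comp_sub_left
    (fun v : ℝ => exp (-2 * π * I * n * ↑(1 - v)) * f v) (a := 0) (b := 1) 1
  simp only [sub_sub_cancel, sub_zero, sub_self, hshift] at this
  rw [fourierCoeffOn_zero_one_eq_integral, fourierCoeffOn_zero_one_eq_integral, ← this]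

/-- For `n = 0` both sides vanish, the right one because `1 / 0 = 0`. -/
theorem fourierCoeffOn_sub_half (n : ℤ) :
    fourierCoeffOn zero_lt_one (fun u => ((u - 1 / 2 : ℝ) : ℂ)) n = 1 / (-2 * π * I * n) := by
  simp_rw [← bernoulliFun_one]
  rw [← bernoulliFourierCoeff, bernoulliFourierCoeff_eq one_ne_zero]
  simp [div_neg, neg_div]

theorem hasSum_fourierCoeffOn_mul_e {f : ℝ → ℂ} (hf : ContinuousOn f (Icc 0 1))
    (hf01 : f 0 = f 1) (hs : Summable (fourierCoeffOn zero_lt_one f)) (x : ℝ) :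
    HasSum (fun n : ℤ => fourierCoeffOn zero_lt_one f n * e (n * x)) (f (Int.fract x)) := by
  have : Fact ((0:ℝ) < 1) := ⟨one_pos⟩
  let F : C(AddCircle (1:ℝ), ℂ) :=
    ⟨AddCircle.liftIco 1 0 f, AddCircle.liftIco_zero_continuous hf01 hf⟩
  have hF : fourierCoeff F = fourierCoeffOn zero_lt_one f := by
    ext n
    change fourierCoeff (AddCircle.liftIco 1 0 f) n = _
    simpa only [zero_add] using fourierCoeff_liftIco_eq (T := 1) (a := 0) f n
  convert has_pointwise_sum_fourier_series_of_summable (hF ▸ hs) (x : AddCircle (1:ℝ)) using 1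
  · ext n
    rw [hF, smul_eq_mul, fourier_coe_apply, e]
    congr 2; push_cast; ring
  · simp [F, AddCircle.liftIco]

theorem summable_norm_of_le_min {f : ℤ → ℂ} {C Y : ℝ} (hC : 0 ≤ C)
    (hf : ∀ n ≠ 0, ‖f n‖ ≤ C * min (1 / |(n:ℝ)|) (Y ^ 3 / |(n:ℝ)| ^ 4)) :
    Summable fun n => ‖f n‖ := by
  refine Summable.of_norm_bounded_eventually
    ((summable_one_div_int_pow.2 (by norm_num : 1 < 4)).mul_left (C * Y ^ 3)) ?_
  filter_upwards [Filter.eventually_cofinite_ne 0] with n hn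
  rw [norm_norm, mul_assoc, mul_one_div, ← Even.pow_abs ⟨2, rfl⟩]
  exact (hf n hn).trans (mul_le_mul_of_nonneg_left (min_le_right _ _) hC)

theorem integral_max_sub_pow_smul {E : Type*} [NormedAddCommGroup E] [NormedSpace ℝ E] {a : ℝ}
    (ha0 : 0 ≤ a) (ha1 : a ≤ 1) {k : ℕ} (hk : k ≠ 0) {f : ℝ → E} (hf : Continuous f) :
    ∫ u in (0:ℝ)..1, max (u - a) 0 ^ k • f u = ∫ u in a..1, (u - a) ^ k • f u := by
  have hcont : Continuous fun u => max (u - a) 0 ^ k • f u := by fun_prop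
  rw [← integral_add_adjacent_intervals (hcont.intervalIntegrable 0 a)
    (hcont.intervalIntegrable a 1)]
  have hleft : ∫ u in (0:ℝ)..a, max (u - a) 0 ^ k • f u = 0 := by
    refine (integral_congr fun u hu => ?_).trans integral_zero
    rw [uIcc_of_le ha0] at hu
    simp [max_eq_right (sub_nonpos.2 hu.2), hk]
  have hright : ∫ u in a..1, max (u - a) 0 ^ k • f u = ∫ u in a..1, (u - a) ^ k • f u := by
    refine integral_congr fun u hu => ?_
    rw [uIcc_of_le ha1] at hu
    simp [max_eq_left (sub_nonneg.2 hu.1)]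
  rw [hleft, hright, zero_add]

theorem integral_sub_pow_three (a b : ℝ) : ∫ u in a..b, (u - a) ^ 3 = (b - a) ^ 4 / 4 := by
  norm_num [integral_comp_sub_right (fun u => u ^ 3), integral_pow]

theorem integral_sub_pow_three_mul_exp {c : ℂ} (hc : c ≠ 0) (a b : ℝ) :
    ∫ u in a..b, ((u:ℂ) - a) ^ 3 * exp (c * u)
      = ((c ^ 3 * (b - a) ^ 3 - 3 * c ^ 2 * (b - a) ^ 2 + 6 * c * (b - a) - 6) * exp (c * b)
        + 6 * exp (c * a)) / c ^ 4 := by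
  have hderiv (z : ℂ) : HasDerivAt (fun z : ℂ => (c ^ 3 * (z - a) ^ 3 - 3 * c ^ 2 * (z - a) ^ 2
      + 6 * c * (z - a) - 6) * exp (c * z) / c ^ 4) ((z - a) ^ 3 * exp (c * z)) z := by
    have hlin : HasDerivAt (fun z : ℂ => z - a) 1 z := (hasDerivAt_id' z).sub_const _
    have hexp : HasDerivAt (fun z : ℂ => exp (c * z)) (exp (c * z) * c) z := by
      simpa using ((hasDerivAt_id' z).const_mul c).cexp
    refine ((((((hlin.pow 3).const_mul _).sub ((hlin.pow 2).const_mul _)).add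
      (hlin.const_mul _)).sub_const 6).mul hexp).div_const _ |>.congr_deriv ?_
    simp only [Pi.add_apply, Pi.sub_apply, Pi.pow_apply]
    field_simp
    ring
  rw [integral_eq_sub_of_hasDerivAt (fun u _ => (hderiv u).comp_ofReal)
    ((by fun_prop : Continuous _).intervalIntegrable a b)]
  simp only [sub_self]
  field_simp
  ring

theorem norm_one_sub_exp_mul_I_le (t : ℝ) : ‖1 - exp (t * I)‖ ≤ min 2 |t| := by
  refine le_min ?_ ?_
  · calc ‖1 - exp (t * I)‖ ≤ ‖(1:ℂ)‖ + ‖exp (t * I)‖ := norm_sub_le _ _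
      _ = 2 := by rw [norm_one, norm_exp_ofReal_mul_I]; norm_num
  · simpa [norm_sub_rev, mul_comm] using norm_exp_I_mul_ofReal_sub_one_le (x := t)

theorem norm_one_sub_exp_pow_three_div_le {c : ℂ} (hre : c.re = 0) (hc : c ≠ 0) {δ : ℝ}
    (hδ : 0 < δ) :
    ‖(1 - exp (c * δ)) ^ 3 / (δ ^ 3 * c ^ 4)‖ ≤ min (1 / ‖c‖) (8 / (δ ^ 3 * ‖c‖ ^ 4)) := by
  have hw : ‖1 - exp (c * δ)‖ ≤ min 2 (‖c‖ * δ) := by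
    have hcI : c * δ = ((c.im * δ : ℝ) : ℂ) * I := by
      conv_lhs => rw [← re_add_im c, hre]
      push_cast; ring
    have hnorm : |c.im * δ| = ‖c‖ * δ := by
      conv_rhs => rw [← re_add_im c, hre]
      simp [abs_mul, abs_of_pos hδ]
    simpa [hcI, hnorm] using norm_one_sub_exp_mul_I_le (c.im * δ)
  have hc' : 0 < ‖c‖ := norm_pos_iff.2 hc
  rw [norm_div, norm_mul, norm_pow, norm_pow, norm_pow, norm_real, Real.norm_of_nonneg hδ.le]
  refine le_min ?_ ?_
  · rw [div_le_div_iff₀ (by positivity) hc']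
    calc ‖1 - exp (c * δ)‖ ^ 3 * ‖c‖ ≤ (‖c‖ * δ) ^ 3 * ‖c‖ := by
          gcongr; exact hw.trans (min_le_right _ _)
      _ = 1 * (δ ^ 3 * ‖c‖ ^ 4) := by ring
  · gcongr
    calc ‖1 - exp (c * δ)‖ ^ 3 ≤ 2 ^ 3 := by gcongr; exact hw.trans (min_le_left _ _)
      _ = 8 := by norm_num

namespace SawtoothApprox

/-- The distribution function of a sum of three independent uniform variables on `[0, δ]`
(for `0 < δ`), written as a third finite difference of `u₊³ / 6`. -/
noncomputable def smoothStep (δ u : ℝ) : ℝ :=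
  (max u 0 ^ 3 - 3 * max (u - δ) 0 ^ 3 + 3 * max (u - 2 * δ) 0 ^ 3 - max (u - 3 * δ) 0 ^ 3)
    / (6 * δ ^ 3)

@[fun_prop]
theorem continuous_smoothStep (δ : ℝ) : Continuous (smoothStep δ) := by
  unfold smoothStep; fun_prop

theorem smoothStep_zero {δ : ℝ} (hδ : 0 ≤ δ) : smoothStep δ 0 = 0 := by
  simp [smoothStep, hδ]

theorem smoothStep_of_le {δ u : ℝ} (hδ : 0 < δ) (hu : 3 * δ ≤ u) : smoothStep δ u = 1 := by
  rw [smoothStep, max_eq_left (by linarith), max_eq_left (by linarith), max_eq_left (by linarith),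
    max_eq_left (by linarith)]
  field_simp; ring

theorem smoothStep_le_one {δ : ℝ} (hδ : 0 < δ) (u : ℝ) : smoothStep δ u ≤ 1 := by
  have h6 : (0:ℝ) < 6 * δ ^ 3 := by positivity
  rcases le_or_gt (3 * δ) u with h3 | h3
  · exact (smoothStep_of_le hδ h3).le
  rw [smoothStep, div_le_one h6, max_eq_right (by linarith : u - 3 * δ ≤ 0)]
  rcases le_or_gt (2 * δ) u with h2 | h2
  · rw [max_eq_left (by linarith), max_eq_left (by linarith), max_eq_left (by linarith)]
    nlinarith [pow_nonneg (show (0:ℝ) ≤ 3 * δ - u by linarith) 3]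
  rw [max_eq_right (by linarith : u - 2 * δ ≤ 0)]
  rcases le_or_gt δ u with h1 | h1
  · rw [max_eq_left (by linarith), max_eq_left (by linarith)]
    nlinarith [mul_nonneg (mul_nonneg (sub_nonneg.2 h1) (sub_nonneg.2 h1)) (sub_nonneg.2 h2.le),
      mul_nonneg (mul_nonneg (sub_nonneg.2 h1) (sub_nonneg.2 h2.le)) (sub_nonneg.2 h2.le),
      mul_nonneg (mul_nonneg (sub_nonneg.2 h1) (sub_nonneg.2 h1)) (sub_nonneg.2 h1)]
  rw [max_eq_right (by linarith : u - δ ≤ 0)]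
  rcases le_or_gt 0 u with h0 | h0
  · rw [max_eq_left h0]
    nlinarith [pow_le_pow_left₀ h0 h1.le 3, pow_pos hδ 3]
  · rw [max_eq_right h0.le]
    nlinarith

theorem integral_smoothStep_smul {E : Type*} [NormedAddCommGroup E] [NormedSpace ℝ E] {δ : ℝ}
    (hδ : 0 ≤ δ) (h3 : 3 * δ ≤ 1) {f : ℝ → E} (hf : Continuous f) :
    ∫ u in (0:ℝ)..1, smoothStep δ u • f u = (6 * δ ^ 3)⁻¹ •
      ((∫ u in (0:ℝ)..1, u ^ 3 • f u) - (3:ℝ) • (∫ u in δ..1, (u - δ) ^ 3 • f u)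
        + (3:ℝ) • (∫ u in 2 * δ..1, (u - 2 * δ) ^ 3 • f u)
        - ∫ u in 3 * δ..1, (u - 3 * δ) ^ 3 • f u) := by
  have hsplit : (fun u => smoothStep δ u • f u) = fun u => (6 * δ ^ 3)⁻¹ •
      (max (u - 0) 0 ^ 3 • f u - (3:ℝ) • max (u - δ) 0 ^ 3 • f u
        + (3:ℝ) • max (u - 2 * δ) 0 ^ 3 • f u - max (u - 3 * δ) 0 ^ 3 • f u) := by
    ext u
    simp only [smoothStep, sub_zero, smul_smul, ← sub_smul, ← add_smul]
    ring_nf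
  rw [hsplit, integral_smul, integral_sub, integral_add, integral_sub, integral_smul,
    integral_smul, integral_max_sub_pow_smul le_rfl zero_le_one three_ne_zero hf,
    integral_max_sub_pow_smul hδ (by linarith) three_ne_zero hf,
    integral_max_sub_pow_smul (by linarith : 0 ≤ 2 * δ) (by linarith) three_ne_zero hf,
    integral_max_sub_pow_smul (by linarith : 0 ≤ 3 * δ) h3 three_ne_zero hf]
  · simp only [sub_zero]
  all_goals exact (by fun_prop : Continuous _).intervalIntegrable 0 1

theorem integral_smoothStep {δ : ℝ} (hδ : 0 < δ) (h3 : 3 * δ ≤ 1) :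
    ∫ u in (0:ℝ)..1, smoothStep δ u = 1 - 3 * δ / 2 := by
  have h := integral_smoothStep_smul hδ.le h3 (continuous_const (y := (1:ℝ)))
  simp only [smul_eq_mul, mul_one, integral_sub_pow_three] at h
  rw [h, integral_pow]
  field_simp
  ring

theorem integral_smoothStep_mul_exp {c : ℂ} (hc : c ≠ 0) (hc1 : exp c = 1) {δ : ℝ} (hδ : 0 < δ)
    (h3 : 3 * δ ≤ 1) :
    ∫ u in (0:ℝ)..1, (smoothStep δ u : ℂ) * exp (c * u)
      = 1 / c + (1 - exp (c * δ)) ^ 3 / (δ ^ 3 * c ^ 4) := by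
  have h := integral_smoothStep_smul hδ.le h3 (f := fun u => exp (c * u)) (by fun_prop)
  have hJ (a : ℝ) : ∫ u in a..1, (((u - a) ^ 3 : ℝ) : ℂ) * exp (c * u)
      = ((c ^ 3 * (1 - a) ^ 3 - 3 * c ^ 2 * (1 - a) ^ 2 + 6 * c * (1 - a) - 6) + 6 * exp (c * a))
        / c ^ 4 := by
    push_cast
    rw [integral_sub_pow_three_mul_exp hc, ofReal_one, mul_one, hc1, mul_one]
  have hJ0 := hJ 0
  have h2 : exp (c * ((2 * δ : ℝ) : ℂ)) = exp (c * δ) ^ 2 := by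
    rw [← Complex.exp_nat_mul]; push_cast; ring_nf
  have h3' : exp (c * ((3 * δ : ℝ) : ℂ)) = exp (c * δ) ^ 3 := by
    rw [← Complex.exp_nat_mul]; push_cast; ring_nf
  simp only [sub_zero, Complex.real_smul] at h hJ0
  have hδ' : (δ : ℂ) ≠ 0 := ofReal_ne_zero.2 hδ.ne'
  rw [h, hJ0, hJ, hJ, hJ, h2, h3', ofReal_zero, mul_zero, Complex.exp_zero]
  push_cast
  field_simp
  ring

noncomputable def correction (δ u : ℝ) : ℝ := 1 - smoothStep δ u - 3 * δ / 2

@[fun_prop]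
theorem continuous_correction (δ : ℝ) : Continuous (correction δ) := by
  unfold correction; fun_prop

theorem neg_le_correction {δ : ℝ} (hδ : 0 < δ) (u : ℝ) : -(3 * δ / 2) ≤ correction δ u := by
  have := smoothStep_le_one hδ u
  unfold correction; linarith

theorem integral_correction {δ : ℝ} (hδ : 0 < δ) (h3 : 3 * δ ≤ 1) :
    ∫ u in (0:ℝ)..1, correction δ u = 0 := by
  simp only [correction]
  rw [integral_sub, integral_sub, integral_smoothStep hδ h3]
  · simp
  all_goals exact (by fun_prop : Continuous _).intervalIntegrable 0 1

theorem integral_exp_mul_correction {c : ℂ} (hc : c ≠ 0) (hc1 : exp c = 1) {δ : ℝ} (hδ : 0 < δ)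
    (h3 : 3 * δ ≤ 1) :
    ∫ u in (0:ℝ)..1, exp (c * u) * (correction δ u : ℂ)
      = -(1 / c + (1 - exp (c * δ)) ^ 3 / (δ ^ 3 * c ^ 4)) := by
  have hexp : ∫ u in (0:ℝ)..1, exp (c * u) = 0 := by
    simp [integral_exp_mul_complex hc, hc1]
  have hsplit (u : ℝ) : exp (c * u) * (correction δ u : ℂ)
      = ((1 - 3 * δ / 2 : ℝ) : ℂ) * exp (c * u) - (smoothStep δ u : ℂ) * exp (c * u) := by
    simp only [correction]; push_cast; ring
  simp only [hsplit]
  rw [integral_sub, integral_const_mul, hexp, mul_zero, zero_sub,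
    integral_smoothStep_mul_exp hc hc1 hδ h3]
  all_goals exact (by fun_prop : Continuous _).intervalIntegrable 0 1

theorem fourierCoeffOn_correction_zero {δ : ℝ} (hδ : 0 < δ) (h3 : 3 * δ ≤ 1) :
    fourierCoeffOn zero_lt_one (fun u => (correction δ u : ℂ)) 0 = 0 := by
  simp [fourierCoeffOn_zero_one_eq_integral, integral_ofReal, integral_correction hδ h3]

theorem fourierCoeffOn_correction {δ : ℝ} (hδ : 0 < δ) (h3 : 3 * δ ≤ 1) {n : ℤ} (hn : n ≠ 0) :
    fourierCoeffOn zero_lt_one (fun u => (correction δ u : ℂ)) n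
      = -(1 / (-2 * π * I * n) + (1 - exp (-2 * π * I * n * δ)) ^ 3
          / (δ ^ 3 * (-2 * π * I * n) ^ 4)) := by
  rw [fourierCoeffOn_zero_one_eq_integral, integral_exp_mul_correction
    (by simp [hn, pi_ne_zero, I_ne_zero]) (exp_neg_two_pi_I_int_mul n) hδ h3]

noncomputable def approx (δ u : ℝ) : ℝ := u - 1 / 2 + correction δ u

noncomputable def symmCorrection (δ u : ℝ) : ℝ := correction δ u + correction δ (1 - u)

noncomputable def majorant (δ u : ℝ) : ℝ := 9 * δ / 2 + symmCorrection δ u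

theorem approx_zero_eq_one {δ : ℝ} (hδ : 0 < δ) (h3 : 3 * δ ≤ 1) : approx δ 0 = approx δ 1 := by
  simp only [approx, correction, smoothStep_zero hδ.le, smoothStep_of_le hδ h3]
  ring

theorem abs_correction_le_majorant {δ : ℝ} (hδ : 0 < δ) (u : ℝ) :
    |correction δ u| ≤ majorant δ u := by
  have h₁ := neg_le_correction hδ u
  have h₂ := neg_le_correction hδ (1 - u)
  rw [majorant, symmCorrection, abs_le]
  constructor <;> linarith

theorem fourierCoeffOn_approx_eq_add {δ : ℝ} (n : ℤ) :
    fourierCoeffOn zero_lt_one (fun u => (approx δ u : ℂ)) n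
      = 1 / (-2 * π * I * n) + fourierCoeffOn zero_lt_one (fun u => (correction δ u : ℂ)) n := by
  simp only [approx, ofReal_add]
  rw [fourierCoeffOn_add, fourierCoeffOn_sub_half]
  all_goals exact (by fun_prop : Continuous _).intervalIntegrable 0 1

theorem fourierCoeffOn_approx_zero {δ : ℝ} (hδ : 0 < δ) (h3 : 3 * δ ≤ 1) :
    fourierCoeffOn zero_lt_one (fun u => (approx δ u : ℂ)) 0 = 0 := by
  simp [fourierCoeffOn_approx_eq_add, fourierCoeffOn_correction_zero hδ h3]

theorem fourierCoeffOn_approx {δ : ℝ} (hδ : 0 < δ) (h3 : 3 * δ ≤ 1) {n : ℤ} (hn : n ≠ 0) :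
    fourierCoeffOn zero_lt_one (fun u => (approx δ u : ℂ)) n
      = -((1 - exp (-2 * π * I * n * δ)) ^ 3 / (δ ^ 3 * (-2 * π * I * n) ^ 4)) := by
  rw [fourierCoeffOn_approx_eq_add, fourierCoeffOn_correction hδ h3 hn]
  ring

theorem fourierCoeffOn_symmCorrection_zero {δ : ℝ} (hδ : 0 < δ) (h3 : 3 * δ ≤ 1) :
    fourierCoeffOn zero_lt_one (fun u => (symmCorrection δ u : ℂ)) 0 = 0 := by
  simp only [symmCorrection, ofReal_add]
  rw [fourierCoeffOn_add, fourierCoeffOn_comp_one_sub (fun u => (correction δ u : ℂ)), neg_zero,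
    fourierCoeffOn_correction_zero hδ h3, add_zero]
  all_goals exact (by fun_prop : Continuous _).intervalIntegrable 0 1

theorem fourierCoeffOn_symmCorrection {δ : ℝ} (hδ : 0 < δ) (h3 : 3 * δ ≤ 1) {n : ℤ}
    (hn : n ≠ 0) :
    fourierCoeffOn zero_lt_one (fun u => (symmCorrection δ u : ℂ)) n
      = -((1 - exp (-2 * π * I * n * δ)) ^ 3 / (δ ^ 3 * (-2 * π * I * n) ^ 4)
        + (1 - exp (-(-2 * π * I * n) * δ)) ^ 3 / (δ ^ 3 * (-(-2 * π * I * n)) ^ 4)) := by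
  simp only [symmCorrection, ofReal_add]
  rw [fourierCoeffOn_add, fourierCoeffOn_comp_one_sub (fun u => (correction δ u : ℂ)),
    fourierCoeffOn_correction hδ h3 hn, fourierCoeffOn_correction hδ h3 (neg_ne_zero.2 hn)]
  · push_cast; ring_nf
  all_goals exact (by fun_prop : Continuous _).intervalIntegrable 0 1

theorem norm_fourierCoeffOn_approx_le {δ : ℝ} (hδ : 0 < δ) (h3 : 3 * δ ≤ 1) {n : ℤ}
    (hn : n ≠ 0) :
    ‖fourierCoeffOn zero_lt_one (fun u => (approx δ u : ℂ)) n‖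
      ≤ min (1 / (2 * π * |(n:ℝ)|)) (8 / (δ ^ 3 * (2 * π * |(n:ℝ)|) ^ 4)) := by
  have hc : ‖-2 * π * I * n‖ = 2 * π * |(n:ℝ)| := by simp [abs_of_pos pi_pos]
  rw [fourierCoeffOn_approx hδ h3 hn, norm_neg, ← hc]
  exact norm_one_sub_exp_pow_three_div_le (by simp) (by simp [hn, pi_ne_zero]) hδ

theorem norm_fourierCoeffOn_symmCorrection_le {δ : ℝ} (hδ : 0 < δ) (h3 : 3 * δ ≤ 1) {n : ℤ}
    (hn : n ≠ 0) :
    ‖fourierCoeffOn zero_lt_one (fun u => (symmCorrection δ u : ℂ)) n‖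
      ≤ 2 * min (1 / (2 * π * |(n:ℝ)|)) (8 / (δ ^ 3 * (2 * π * |(n:ℝ)|) ^ 4)) := by
  have hc : ‖-2 * π * I * n‖ = 2 * π * |(n:ℝ)| := by simp [abs_of_pos pi_pos]
  have hc0 : -2 * π * I * n ≠ 0 := by simp [hn, pi_ne_zero]
  rw [fourierCoeffOn_symmCorrection hδ h3 hn, norm_neg, two_mul]
  refine (norm_add_le _ _).trans (add_le_add ?_ ?_)
  · rw [← hc]; exact norm_one_sub_exp_pow_three_div_le (by simp) hc0 hδ
  · have := norm_one_sub_exp_pow_three_div_le (by simp) (neg_ne_zero.2 hc0) hδ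
    rwa [norm_neg, hc] at this

theorem min_bound_two_div_nine_le {Y x : ℝ} (hY : 0 < Y) (hx : 0 < x) :
    min (1 / (2 * π * x)) (8 / ((2 / (9 * Y)) ^ 3 * (2 * π * x) ^ 4))
      ≤ min (1 / x) (Y ^ 3 / x ^ 4) := by
  have hπ : 6 ≤ 2 * π := by linarith [pi_gt_three]
  refine min_le_min ?_ ?_
  · gcongr; nlinarith
  · have h8 : 8 / ((2 / (9 * Y)) ^ 3 * (2 * π * x) ^ 4)
        = 729 * Y ^ 3 / ((2 * π) ^ 4 * x ^ 4) := by
      field_simp; ring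
    rw [h8, div_le_div_iff₀ (by positivity) (by positivity)]
    have h6 : (6:ℝ) ^ 4 ≤ (2 * π) ^ 4 := by gcongr
    have hYx : 0 ≤ Y ^ 3 * x ^ 4 := by positivity
    nlinarith [mul_le_mul_of_nonneg_left h6 hYx]

end SawtoothApprox

open SawtoothApprox

/-- Vinogradov/Fouvry–Iwaniec approximation: for every `Y > 1` there are 1-periodic
functions `A`, `B` with absolutely convergent Fourier expansions
`A(x) = ∑_{h≠0} A_h e(hx)`, `B(x) = Y⁻¹ + ∑_{h≠0} B_h e(hx)` such that
`|ψ(x) - A(x)| ≤ B(x)` for all `x`, with `|A_h|, |B_h| ≪ min(1/|h|, Y³/|h|⁴)`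
(absolute implied constant). -/
theorem stmt_4 :
    ∃ C > (0 : ℝ), ∀ Y : ℝ, 1 < Y →
      ∃ (A : ℝ → ℂ) (B : ℝ → ℝ) (Ah Bh : ℤ → ℂ),
        Function.Periodic A 1 ∧ Function.Periodic B 1 ∧
        Ah 0 = 0 ∧ Bh 0 = 0 ∧
        Summable (fun h : ℤ => ‖Ah h‖) ∧ Summable (fun h : ℤ => ‖Bh h‖) ∧
        (∀ x : ℝ, A x = ∑' h : ℤ, Ah h * e ((h : ℝ) * x)) ∧
        (∀ x : ℝ, (B x : ℂ) = ((Y⁻¹ : ℝ) : ℂ) + ∑' h : ℤ, Bh h * e ((h : ℝ) * x)) ∧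
        (∀ x : ℝ, ‖((sawtooth x : ℝ) : ℂ) - A x‖ ≤ B x) ∧
        (∀ h : ℤ, h ≠ 0 → ‖Ah h‖ ≤ C * min (1 / |(h : ℝ)|) (Y ^ 3 / |(h : ℝ)| ^ 4)) ∧
        (∀ h : ℤ, h ≠ 0 → ‖Bh h‖ ≤ C * min (1 / |(h : ℝ)|) (Y ^ 3 / |(h : ℝ)| ^ 4)) := by
  refine ⟨2, two_pos, fun Y hY => ?_⟩
  have hY0 : 0 < Y := by linarith
  -- the mean of `majorant δ` is `9δ / 2`, which must equal `Y⁻¹`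
  set δ : ℝ := 2 / (9 * Y) with hδ_def
  have hδ : 0 < δ := by positivity
  have h3 : 3 * δ ≤ 1 := by rw [hδ_def]; field_simp; linarith
  have hscale (n : ℤ) (hn : n ≠ 0) :=
    min_bound_two_div_nine_le hY0 (abs_pos.2 (Int.cast_ne_zero.2 hn))
  have hA (n : ℤ) (hn : n ≠ 0) :=
    ((norm_fourierCoeffOn_approx_le hδ h3 hn).trans (hscale n hn)).trans
      (le_mul_of_one_le_left (by positivity) one_le_two)
  have hB (n : ℤ) (hn : n ≠ 0) := (norm_fourierCoeffOn_symmCorrection_le hδ h3 hn).trans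
    (mul_le_mul_of_nonneg_left (hscale n hn) two_pos.le)
  have hsA := summable_norm_of_le_min two_pos.le hA
  have hsB := summable_norm_of_le_min two_pos.le hB
  refine ⟨fun x => approx δ (Int.fract x), fun x => majorant δ (Int.fract x), _, _,
    fun x => by simp, fun x => by simp, fourierCoeffOn_approx_zero hδ h3,
    fourierCoeffOn_symmCorrection_zero hδ h3, hsA, hsB, fun x => ?_, fun x => ?_, fun x => ?_,
    hA, hB⟩
  · exact (hasSum_fourierCoeffOn_mul_e (by unfold approx; fun_prop : Continuous _).continuousOn
      (by simp [approx_zero_eq_one hδ h3]) hsA.of_norm x).tsum_eq.symm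
  · rw [(hasSum_fourierCoeffOn_mul_e
      (by unfold symmCorrection; fun_prop : Continuous _).continuousOn
      (by simp [symmCorrection, add_comm]) hsB.of_norm x).tsum_eq, hδ_def]
    simp only [majorant]; push_cast; field_simp
  · show ‖((sawtooth x : ℝ) : ℂ) - (approx δ (Int.fract x) : ℂ)‖ ≤ majorant δ (Int.fract x)
    rw [sawtooth, Int.self_sub_floor, approx, ← ofReal_sub, norm_real, Real.norm_eq_abs]
    simpa [abs_sub_comm] using abs_correction_le_majorant hδ (Int.fract x)
end

section
/- Assume: (i) for all primes q ≤ X^{1/2} and gcd(a,q)=1, E(X,q,a) ≪_ε X^{1/2} q^{-1/2} + q^{1/2+ε} (Hooley); and (ii) Theorem: for each 0 < γ < 1/2 there is C(γ) with |E(X,q,a)| ≤ C(γ)(X^{1/3}(log log X)^{7/3}/(log X)^{1/6 - γ/3} + X (log log X)²/(q (log X)^{γ/2})) for all primes q ≤ X. Deduce: for every ε > 0, uniformly for primes q ≤ X^{2/3}(log X)^{1/6 - ε} and gcd(a,q)=1, ∑_{n ≤ X, n ≡ a (mod q)} μ²(n) ~ (6/π²)(1 - 1/q²)^{-1} X/q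 as X → ∞. -/
/-!
Take `γ = min ε (1/4)` in the bound (ii). In the range `q ≤ X^{2/3} (log X)^{1/6-γ}` we have
`q X^{1/3} ≤ X (log X)^{1/6-γ}`, so both terms of (ii) are `(X/q)` times a power of
`log log X` over a positive power of `log X`, i.e. `o(X/q)`. The coprime count differs from the
main term `(6/π²)(1 - q⁻²)⁻¹ X/q` by `O(X^{3/4}/q) = o(X/q)`, and the main term is at least
`(6/π²) X/q`.
-/

open Finset
open scoped Classical

/-- The error term for squarefree numbers in arithmetic progressions. -/
noncomputable def errTerm (X : ℝ) (q a : ℕ) : ℝ :=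
  (((Finset.Icc 1 ⌊X⌋₊).filter (fun n => Squarefree n ∧ (n : ZMod q) = (a : ZMod q))).card : ℝ)
    - (1 / (Nat.totient q : ℝ)) *
        (((Finset.Icc 1 ⌊X⌋₊).filter (fun n => Squarefree n ∧ Nat.Coprime n q)).card : ℝ)

open Filter Topology Real

noncomputable def sqfreeCountAP (X : ℝ) (q a : ℕ) : ℝ :=
  ((Finset.Icc 1 ⌊X⌋₊).filter (fun n => Squarefree n ∧ (n : ZMod q) = (a : ZMod q))).card

noncomputable def sqfreeCountCoprime (X : ℝ) (q : ℕ) : ℝ :=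
  ((Finset.Icc 1 ⌊X⌋₊).filter (fun n => Squarefree n ∧ Nat.Coprime n q)).card

noncomputable def sqfreeMainTerm (X q : ℝ) : ℝ :=
  6 / π ^ 2 * (1 - 1 / q ^ 2)⁻¹ * (X / q)

lemma abs_sqfreeCountAP_sub_le (X : ℝ) (q a : ℕ) :
    |sqfreeCountAP X q a - sqfreeMainTerm X q| ≤
      |errTerm X q a| + |1 / (q.totient : ℝ) * sqfreeCountCoprime X q - sqfreeMainTerm X q| :=
  abs_sub_le _ _ _

lemma one_le_inv_one_sub_one_div_sq {x : ℝ} (hx : 1 < x) : 1 ≤ (1 - 1 / x ^ 2)⁻¹ := by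
  have hpos : 0 < 1 / x ^ 2 := by positivity
  have hlt : 1 / x ^ 2 < 1 := (div_lt_one (by positivity)).mpr (one_lt_pow₀ hx two_ne_zero)
  exact one_le_inv₀ (by linarith) |>.mpr (by linarith)

lemma mul_div_le_sqfreeMainTerm {X q : ℝ} (hX : 0 ≤ X) (hq : 1 < q) :
    6 / π ^ 2 * (X / q) ≤ sqfreeMainTerm X q := by
  have hXq : 0 ≤ X / q := div_nonneg hX (by linarith)
  calc 6 / π ^ 2 * (X / q) = 6 / π ^ 2 * 1 * (X / q) := by ring
    _ ≤ sqfreeMainTerm X q := by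
      unfold sqfreeMainTerm
      gcongr
      exact one_le_inv_one_sub_one_div_sq hq

lemma tendsto_log_log_rpow_mul_log_rpow_neg (a : ℝ) {b : ℝ} (hb : 0 < b) :
    Tendsto (fun x : ℝ => log (log x) ^ a * log x ^ (-b)) atTop (𝓝 0) := by
  have h := (isLittleO_log_rpow_rpow_atTop a hb).tendsto_div_nhds_zero
  refine (h.comp tendsto_log_atTop).congr' ?_
  filter_upwards [tendsto_log_atTop.eventually_gt_atTop 0] with x hx
  simp only [Function.comp, rpow_neg hx.le, div_eq_mul_inv]

lemma le_of_le_rpow_two_thirds_mul_log_rpow {X q γ : ℝ} (hX : 0 < X) (hlog : 1 ≤ log X)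
    (hγ : 0 ≤ γ) (hq : q ≤ X ^ ((2 : ℝ) / 3) * log X ^ ((1 : ℝ) / 6 - γ)) : q ≤ X := by
  have hX1 : 1 ≤ X := by
    by_contra! h
    linarith [log_nonpos hX.le h.le]
  calc q ≤ X ^ ((2 : ℝ) / 3) * log X ^ ((1 : ℝ) / 6 - γ) := hq
    _ ≤ X ^ ((2 : ℝ) / 3) * X ^ ((1 : ℝ) / 3) := by
      gcongr
      calc log X ^ ((1 : ℝ) / 6 - γ) ≤ log X ^ ((1 : ℝ) / 6) :=
            rpow_le_rpow_of_exponent_le hlog (by linarith)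
        _ ≤ X ^ ((1 : ℝ) / 6) := by gcongr; exact log_le_self hX.le
        _ ≤ X ^ ((1 : ℝ) / 3) := rpow_le_rpow_of_exponent_le hX1 (by norm_num)
    _ = X := by rw [← rpow_add hX]; norm_num

lemma rpow_one_third_div_le {X q L γ : ℝ} (hX : 0 < X) (hq : 0 < q) (hL : 0 < L)
    (hqX : q ≤ X ^ ((2 : ℝ) / 3) * L ^ ((1 : ℝ) / 6 - γ)) :
    X ^ ((1 : ℝ) / 3) / L ^ ((1 : ℝ) / 6 - γ / 3) ≤ X / q * L ^ (-(2 * γ / 3)) := by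
  rw [div_mul_eq_mul_div, le_div_iff₀ hq]
  calc X ^ ((1 : ℝ) / 3) / L ^ ((1 : ℝ) / 6 - γ / 3) * q
      ≤ X ^ ((1 : ℝ) / 3) / L ^ ((1 : ℝ) / 6 - γ / 3) *
          (X ^ ((2 : ℝ) / 3) * L ^ ((1 : ℝ) / 6 - γ)) := by gcongr
    _ = (X ^ ((1 : ℝ) / 3) * X ^ ((2 : ℝ) / 3)) *
          (L ^ ((1 : ℝ) / 6 - γ) / L ^ ((1 : ℝ) / 6 - γ / 3)) := by ring
    _ = X * L ^ (-(2 * γ / 3)) := by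
      rw [← rpow_add hX, ← rpow_sub hL, show (1 : ℝ) / 3 + 2 / 3 = 1 by norm_num, rpow_one]
      ring_nf

lemma errTerm_bound_le_div_mul {X q L M γ C : ℝ} (hX : 0 < X) (hq : 0 < q) (hL : 0 < L)
    (hC : 0 ≤ C) (hM : 0 ≤ M) (hqX : q ≤ X ^ ((2 : ℝ) / 3) * L ^ ((1 : ℝ) / 6 - γ)) :
    C * (X ^ ((1 : ℝ) / 3) * M ^ ((7 : ℝ) / 3) / L ^ ((1 : ℝ) / 6 - γ / 3)
        + X * M ^ 2 / (q * L ^ (γ / 2)))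
      ≤ X / q * (C * (M ^ ((7 : ℝ) / 3) * L ^ (-(2 * γ / 3)) + M ^ 2 * L ^ (-(γ / 2)))) := by
  have h₁ := rpow_one_third_div_le hX hq hL hqX
  have h₂ : X * M ^ 2 / (q * L ^ (γ / 2)) = X / q * (M ^ 2 * L ^ (-(γ / 2))) := by
    rw [rpow_neg hL.le]
    field_simp
  calc C * (X ^ ((1 : ℝ) / 3) * M ^ ((7 : ℝ) / 3) / L ^ ((1 : ℝ) / 6 - γ / 3)
        + X * M ^ 2 / (q * L ^ (γ / 2)))
      = C * (M ^ ((7 : ℝ) / 3) * (X ^ ((1 : ℝ) / 3) / L ^ ((1 : ℝ) / 6 - γ / 3))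
        + X / q * (M ^ 2 * L ^ (-(γ / 2)))) := by rw [h₂]; ring
    _ ≤ C * (M ^ ((7 : ℝ) / 3) * (X / q * L ^ (-(2 * γ / 3)))
        + X / q * (M ^ 2 * L ^ (-(γ / 2)))) := by gcongr
    _ = _ := by ring

theorem stmt_13_general
    (hThm : ∀ γ : ℝ, 0 < γ → γ < 1 / 2 → ∃ C > (0 : ℝ), ∀ (X : ℝ) (q a : ℕ),
      3 ≤ X → q.Prime → (q : ℝ) ≤ X → Nat.Coprime a q →
      |errTerm X q a| ≤ C * (X ^ ((1 : ℝ) / 3) *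
          (Real.log (Real.log X)) ^ ((7 : ℝ) / 3) / (Real.log X) ^ ((1 : ℝ) / 6 - γ / 3)
        + X * (Real.log (Real.log X)) ^ 2 / ((q : ℝ) * (Real.log X) ^ (γ / 2))))
    (hMain : ∀ ε > (0 : ℝ), ∃ C > (0 : ℝ), ∀ (X : ℝ) (q : ℕ), 1 ≤ X → q.Prime →
      |(1 / (Nat.totient q : ℝ)) *
          (((Finset.Icc 1 ⌊X⌋₊).filter (fun n => Squarefree n ∧ Nat.Coprime n q)).card : ℝ)
        - (6 / Real.pi ^ 2) * (1 - 1 / (q : ℝ) ^ 2)⁻¹ * (X / q)|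
        ≤ C * X ^ ((1 : ℝ) / 2 + ε) / q) :
    ∀ ε > (0 : ℝ), ∀ c > (0 : ℝ), ∃ X₀ : ℝ, ∀ X ≥ X₀, ∀ q a : ℕ,
      q.Prime → (q : ℝ) ≤ X ^ ((2 : ℝ) / 3) * (Real.log X) ^ ((1 : ℝ) / 6 - ε) →
      Nat.Coprime a q →
      |(((Finset.Icc 1 ⌊X⌋₊).filter
            (fun n => Squarefree n ∧ (n : ZMod q) = (a : ZMod q))).card : ℝ)
          - (6 / Real.pi ^ 2) * (1 - 1 / (q : ℝ) ^ 2)⁻¹ * (X / q)|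
        ≤ c * ((6 / Real.pi ^ 2) * (1 - 1 / (q : ℝ) ^ 2)⁻¹ * (X / q)) := by
  intro ε hε c hc
  set γ := min ε (1 / 4)
  have hγ : 0 < γ := lt_min hε (by norm_num)
  obtain ⟨CT, hCT, hT⟩ := hThm γ hγ (by linarith [min_le_right ε (1 / 4)])
  obtain ⟨CM, -, hM⟩ := hMain (1 / 4) (by norm_num)
  set r : ℝ → ℝ := fun X => CT * (log (log X) ^ ((7 : ℝ) / 3) * log X ^ (-(2 * γ / 3))
    + log (log X) ^ 2 * log X ^ (-(γ / 2))) + CM * X ^ (-(1 / 4 : ℝ))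
  have hr : Tendsto r atTop (𝓝 0) := by
    have hsq := tendsto_log_log_rpow_mul_log_rpow_neg (2 : ℕ) (by positivity : 0 < γ / 2)
    simp only [rpow_natCast] at hsq
    simpa using (((tendsto_log_log_rpow_mul_log_rpow_neg _ (by positivity)).add hsq).const_mul
      CT).add ((tendsto_rpow_neg_atTop (by norm_num)).const_mul CM)
  obtain ⟨X₀, hX₀⟩ := eventually_atTop.mp <| (eventually_ge_atTop 3).and <|
    (tendsto_log_atTop.eventually_ge_atTop 1).and <|
    hr.eventually_le_const (by positivity : 0 < c * (6 / π ^ 2))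
  refine ⟨X₀, fun X hX q a hq hqle hcop => ?_⟩
  obtain ⟨hX3, hlog, hrX⟩ := hX₀ X hX
  have hX : 0 < X := by linarith
  have hq1 : 1 < (q : ℝ) := by exact_mod_cast hq.one_lt
  have hqγ : (q : ℝ) ≤ X ^ ((2 : ℝ) / 3) * log X ^ ((1 : ℝ) / 6 - γ) :=
    hqle.trans (by gcongr; exact min_le_left _ _)
  have hqX := le_of_le_rpow_two_thirds_mul_log_rpow hX hlog hγ.le hqγ
  have herr := (hT X q a hX3 hq hqX hcop).trans
    (errTerm_bound_le_div_mul hX (by positivity) (by positivity) hCT.le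
      (log_nonneg (by linarith)) hqγ)
  have hmain : |1 / (q.totient : ℝ) * sqfreeCountCoprime X q - sqfreeMainTerm X q|
      ≤ X / q * (CM * X ^ (-(1 / 4 : ℝ))) := by
    refine (hM X q (by linarith) hq).trans_eq ?_
    rw [show (1 : ℝ) / 2 + 1 / 4 = 1 + -(1 / 4) by norm_num, rpow_add hX, rpow_one]
    ring
  change |sqfreeCountAP X q a - sqfreeMainTerm X q| ≤ c * sqfreeMainTerm X q
  calc |sqfreeCountAP X q a - sqfreeMainTerm X q|
      ≤ |errTerm X q a| + |1 / (q.totient : ℝ) * sqfreeCountCoprime X q - sqfreeMainTerm X q| :=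
        abs_sqfreeCountAP_sub_le X q a
    _ ≤ X / q * r X := (add_le_add herr hmain).trans_eq (mul_add _ _ _).symm
    _ ≤ X / q * (c * (6 / π ^ 2)) := by gcongr
    _ = c * (6 / π ^ 2 * (X / q)) := by ring
    _ ≤ c * sqfreeMainTerm X q := by gcongr; exact mul_div_le_sqfreeMainTerm hX.le hq1

/-- Given Hooley's bound, the bound of Theorem 3 of the paper, and the asymptotic for the
main term, the asymptotic formula for squarefree numbers in progressions holds uniformly
for primes `q ≤ X^{2/3} (log X)^{1/6-ε}`. -/
theorem stmt_13
    (hHooley : ∀ ε > (0 : ℝ), ∃ C > (0 : ℝ), ∀ (X : ℝ) (q a : ℕ),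
      1 ≤ X → q.Prime → (q : ℝ) ≤ X ^ ((1 : ℝ) / 2) → Nat.Coprime a q →
      |errTerm X q a| ≤ C * (X ^ ((1 : ℝ) / 2) * (q : ℝ) ^ (-(1 : ℝ) / 2)
        + (q : ℝ) ^ ((1 : ℝ) / 2 + ε)))
    (hThm : ∀ γ : ℝ, 0 < γ → γ < 1 / 2 → ∃ C > (0 : ℝ), ∀ (X : ℝ) (q a : ℕ),
      3 ≤ X → q.Prime → (q : ℝ) ≤ X → Nat.Coprime a q →
      |errTerm X q a| ≤ C * (X ^ ((1 : ℝ) / 3) *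
          (Real.log (Real.log X)) ^ ((7 : ℝ) / 3) / (Real.log X) ^ ((1 : ℝ) / 6 - γ / 3)
        + X * (Real.log (Real.log X)) ^ 2 / ((q : ℝ) * (Real.log X) ^ (γ / 2))))
    (hMain : ∀ ε > (0 : ℝ), ∃ C > (0 : ℝ), ∀ (X : ℝ) (q : ℕ), 1 ≤ X → q.Prime →
      |(1 / (Nat.totient q : ℝ)) *
          (((Finset.Icc 1 ⌊X⌋₊).filter (fun n => Squarefree n ∧ Nat.Coprime n q)).card : ℝ)
        - (6 / Real.pi ^ 2) * (1 - 1 / (q : ℝ) ^ 2)⁻¹ * (X / q)|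
        ≤ C * X ^ ((1 : ℝ) / 2 + ε) / q) :
    ∀ ε > (0 : ℝ), ∀ c > (0 : ℝ), ∃ X₀ : ℝ, ∀ X ≥ X₀, ∀ q a : ℕ,
      q.Prime → (q : ℝ) ≤ X ^ ((2 : ℝ) / 3) * (Real.log X) ^ ((1 : ℝ) / 6 - ε) →
      Nat.Coprime a q →
      |(((Finset.Icc 1 ⌊X⌋₊).filter
            (fun n => Squarefree n ∧ (n : ZMod q) = (a : ZMod q))).card : ℝ)
          - (6 / Real.pi ^ 2) * (1 - 1 / (q : ℝ) ^ 2)⁻¹ * (X / q)|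
        ≤ c * ((6 / Real.pi ^ 2) * (1 - 1 / (q : ℝ) ^ 2)⁻¹ * (X / q)) :=
  stmt_13_general hThm hMain
end
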